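/- arXiv:1805.07199 — 2 statements merged into one kernel-verified Lean document; each statement's English description precedes it below -/
import Mathlib

section
/- Let s ≥ 1 be an integer and η > 0, and let L_{s,η} = (1+ω₀)/ω₁. Then the maximum of |B_s(ξ)| over ξ ∈ [−L_{s,η}, 0] equals 1; in particular |B_s(ξ)| ≤ 1 for every ξ ∈ [−L_{s,η}, 0]. -/
open Polynomial Matrix

noncomputable section

/-- The degree-`n` Chebyshev polynomial of the first kind over `ℝ`,
characterized by `T_n (cos θ) = cos (n θ)`. -/
def chebT (n : ℕ) : Polynomial ℝ := Polynomial.Chebyshev.T ℝ (n : ℤ)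

/-- `ω₀ = 1 + η / s²`. -/
def omega0 (s : ℕ) (η : ℝ) : ℝ := 1 + η / (s : ℝ) ^ 2

/-- `ω₁ = T_s(ω₀) / T_s'(ω₀)`. -/
def omega1 (s : ℕ) (η : ℝ) : ℝ :=
  (chebT s).eval (omega0 s η) / (Polynomial.derivative (chebT s)).eval (omega0 s η)

/-- `α_s(η) = 1 / T_s(ω₀)`. -/
def alphaS (s : ℕ) (η : ℝ) : ℝ := ((chebT s).eval (omega0 s η))⁻¹

/-- The stability polynomial `R_s(z) = T_s(ω₀ + ω₁ z) / T_s(ω₀)`. -/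
def RsPoly (s : ℕ) (η : ℝ) : Polynomial ℝ :=
  Polynomial.C (alphaS s η) *
    (chebT s).comp (Polynomial.C (omega0 s η) + Polynomial.C (omega1 s η) * Polynomial.X)

/-- The polynomial `B_s` with `ζ · B_s(ζ) = R_s(ζ) − 1`. -/
def BsPoly (s : ℕ) (η : ℝ) : Polynomial ℝ := (RsPoly s η - 1) /ₘ Polynomial.X

/-- The ESGD stage number `s = ⌈√((κ−1)η/2)⌉`. -/
def stages (κ η : ℝ) : ℕ := ⌈Real.sqrt ((κ - 1) * η / 2)⌉₊

/-- The ESGD step size `h = (ω₀ − 1)/(ω₁ ℓ)`. -/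
def stepSize (κ η ℓ : ℝ) : ℝ :=
  (omega0 (stages κ η) η - 1) / (omega1 (stages κ η) η * ℓ)

/-- The constant `C(η) = ω₁ α_s(η) / (ω₀ − 1)`. -/
def Ceta (s : ℕ) (η : ℝ) : ℝ := omega1 s η * alphaS s η / (omega0 s η - 1)

end

/-! With `x = ω₀ + ω₁ ξ`, the interval `-L ≤ ξ ≤ 0` becomes `-1 ≤ x ≤ ω₀`. There `T_s ≤ T_s(ω₀)` and
`T_s' ≤ T_s'(ω₀)`: on `[-1, 1]` every derivative of `T_s` is bounded in absolute value by its value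
at `1`, and on `[1, ∞)` all derivatives of `T_s` are nonnegative, hence nondecreasing. The bound on
`T_s'` puts `T_s` above its tangent at `ω₀`, and as `ω₁ T_s'(ω₀) = T_s(ω₀)` the two bounds read
`ξ ≤ R_s(ξ) - 1 ≤ 0`, i.e. `0 ≤ B_s(ξ) ≤ 1` for `ξ < 0`; finally `B_s(0) = R_s'(0) = 1`. -/

open Polynomial.Chebyshev Set

theorem Polynomial.eval_divByMonic_X_zero {R : Type*} [CommRing R] (p : R[X]) :
    (p /ₘ X).eval 0 = (derivative p).eval 0 := by
  have h := modByMonic_add_div p X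
  rw [modByMonic_X] at h
  conv_rhs => rw [← h]
  simp [derivative_mul]

namespace Polynomial.Chebyshev

theorem eval_iterate_derivative_T_real_nonneg (n k : ℕ) {x : ℝ} (hx : 1 ≤ x) :
    0 ≤ (derivative^[k] (T ℝ n)).eval x := by
  -- extremality of `T_n` among polynomials bounded by `1` on `[-1, 1]`, applied to `P = 0`
  simpa using eval_iterate_derivative_le_of_forall_abs_le_one (P := 0) (k := k) hx
    (by simp) (by simp)

theorem monotoneOn_eval_iterate_derivative_T_real (n k : ℕ) :
    MonotoneOn (fun x => (derivative^[k] (T ℝ n)).eval x) (Ici 1) := by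
  refine monotoneOn_of_deriv_nonneg (convex_Ici 1) (Polynomial.continuousOn _)
    (Polynomial.differentiableOn _) fun x hx => ?_
  rw [interior_Ici] at hx
  rw [Polynomial.deriv, ← Function.iterate_succ_apply' derivative]
  exact eval_iterate_derivative_T_real_nonneg n (k + 1) (le_of_lt hx)

theorem eval_iterate_derivative_T_real_le (n k : ℕ) {a x : ℝ} (ha : 1 ≤ a)
    (hx : x ∈ Icc (-1) a) :
    (derivative^[k] (T ℝ n)).eval x ≤ (derivative^[k] (T ℝ n)).eval a := by
  rcases le_total x 1 with hx1 | hx1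
  · calc (derivative^[k] (T ℝ n)).eval x
        ≤ |(derivative^[k] (T ℝ n)).eval x| := le_abs_self _
      _ ≤ (derivative^[k] (T ℝ n)).eval 1 :=
        abs_iterate_derivative_T_real_le n k (abs_le.2 ⟨hx.1, hx1⟩)
      _ ≤ (derivative^[k] (T ℝ n)).eval a :=
        monotoneOn_eval_iterate_derivative_T_real n k self_mem_Ici ha ha
  · exact monotoneOn_eval_iterate_derivative_T_real n k hx1 (hx1.trans hx.2) hx.2

theorem eval_T_real_sub_le_derivative_mul_sub (n : ℕ) {a x : ℝ} (ha : 1 ≤ a) (hx : x ∈ Icc (-1) a) :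
    (T ℝ n).eval a - (T ℝ n).eval x ≤ (derivative (T ℝ n)).eval a * (a - x) :=
  (convex_Icc (-1) a).image_sub_le_mul_sub_of_deriv_le (Polynomial.continuousOn _)
    (Polynomial.differentiableOn _)
    (fun y hy => by
      rw [Polynomial.deriv]
      exact eval_iterate_derivative_T_real_le n 1 ha (interior_subset hy))
    x hx a (right_mem_Icc.2 (by linarith)) hx.2

end Polynomial.Chebyshev

section Stability

variable {s : ℕ} {η : ℝ}

lemma one_le_omega0 (hη : 0 ≤ η) : 1 ≤ omega0 s η :=
  le_add_of_nonneg_right (by positivity)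

lemma eval_chebT_omega0_pos (hη : 0 ≤ η) : 0 < (chebT s).eval (omega0 s η) :=
  zero_lt_one.trans_le (one_le_eval_T_real _ (one_le_omega0 hη))

lemma eval_derivative_chebT_omega0_pos (hs : s ≠ 0) (hη : 0 ≤ η) :
    0 < (derivative (chebT s)).eval (omega0 s η) := by
  have h := eval_iterate_derivative_T_real_le s 1 (one_le_omega0 (s := s) hη)
    (x := 1) ⟨by norm_num, one_le_omega0 hη⟩
  simp only [Function.iterate_one, derivative_T_eval_one, Int.cast_natCast] at h
  exact (pow_pos (Nat.cast_pos.2 (Nat.pos_of_ne_zero hs)) 2).trans_le h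

lemma omega1_pos (hs : s ≠ 0) (hη : 0 ≤ η) : 0 < omega1 s η :=
  div_pos (eval_chebT_omega0_pos hη) (eval_derivative_chebT_omega0_pos hs hη)

lemma eval_RsPoly (ξ : ℝ) :
    (RsPoly s η).eval ξ =
      (chebT s).eval (omega0 s η + omega1 s η * ξ) / (chebT s).eval (omega0 s η) := by
  simp [RsPoly, alphaS, eval_comp, div_eq_inv_mul]

lemma eval_RsPoly_zero (hη : 0 ≤ η) : (RsPoly s η).eval 0 = 1 := by
  rw [eval_RsPoly, mul_zero, add_zero,
    div_self (eval_chebT_omega0_pos hη).ne']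

lemma mul_eval_BsPoly (hη : 0 ≤ η) (ξ : ℝ) :
    ξ * (BsPoly s η).eval ξ = (RsPoly s η).eval ξ - 1 := by
  have h := (mul_divByMonic_eq_iff_isRoot (p := RsPoly s η - 1) (a := 0)).2
    (by simp [eval_RsPoly_zero hη])
  simpa [BsPoly] using congrArg (eval ξ) h

lemma omega1_mul_eval_derivative_chebT_omega0 (hs : s ≠ 0) (hη : 0 ≤ η) :
    omega1 s η * (derivative (chebT s)).eval (omega0 s η) = (chebT s).eval (omega0 s η) :=
  div_mul_cancel₀ _ (eval_derivative_chebT_omega0_pos hs hη).ne'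

lemma eval_BsPoly_zero (hs : s ≠ 0) (hη : 0 ≤ η) : (BsPoly s η).eval 0 = 1 := by
  rw [BsPoly, eval_divByMonic_X_zero, derivative_sub, derivative_one, sub_zero, RsPoly,
    derivative_C_mul, derivative_comp]
  simp only [derivative_add, derivative_C, derivative_C_mul_X, zero_add, eval_mul, eval_C,
    eval_comp, eval_add, eval_X, mul_zero, add_zero]
  rw [omega1_mul_eval_derivative_chebT_omega0 hs hη, alphaS,
    inv_mul_cancel₀ (eval_chebT_omega0_pos hη).ne']

lemma eval_RsPoly_sub_one_mem_Icc (hs : s ≠ 0) (hη : 0 ≤ η) {ξ : ℝ}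
    (hξ : ξ ∈ Icc (-((1 + omega0 s η) / omega1 s η)) 0) :
    (RsPoly s η).eval ξ - 1 ∈ Icc ξ 0 := by
  set a := omega0 s η
  set x := a + omega1 s η * ξ
  have ha : 1 ≤ a := one_le_omega0 hη
  have hω := omega1_pos hs hη
  have hTa : 0 < (chebT s).eval a := eval_chebT_omega0_pos hη
  have hx : x ∈ Icc (-1) a := by
    have hL := hξ.1
    rw [← neg_div, div_le_iff₀ hω] at hL
    exact ⟨by linarith, by nlinarith [hξ.2]⟩
  have hupper : (chebT s).eval x ≤ (chebT s).eval a :=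
    eval_iterate_derivative_T_real_le s 0 ha hx
  have htangent : (chebT s).eval a - (chebT s).eval x ≤ -((chebT s).eval a * ξ) :=
    calc (chebT s).eval a - (chebT s).eval x
        ≤ (derivative (chebT s)).eval a * (a - x) := eval_T_real_sub_le_derivative_mul_sub s ha hx
      _ = -(omega1 s η * (derivative (chebT s)).eval a * ξ) := by ring
      _ = -((chebT s).eval a * ξ) := by rw [omega1_mul_eval_derivative_chebT_omega0 hs hη]
  rw [eval_RsPoly, div_sub_one hTa.ne']
  exact ⟨(le_div_iff₀ hTa).2 (by linarith), div_nonpos_of_nonpos_of_nonneg (by linarith) hTa.le⟩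

lemma eval_BsPoly_mem_Icc (hs : s ≠ 0) (hη : 0 ≤ η) {ξ : ℝ}
    (hξ : ξ ∈ Icc (-((1 + omega0 s η) / omega1 s η)) 0) :
    (BsPoly s η).eval ξ ∈ Icc 0 1 := by
  rcases hξ.2.lt_or_eq with hneg | rfl
  · have h := eval_RsPoly_sub_one_mem_Icc hs hη hξ
    rw [← mul_eval_BsPoly hη] at h
    exact ⟨nonneg_of_mul_nonpos_right h.2 hneg,
      (mul_le_mul_left_of_neg hneg).1 (by simpa using h.1)⟩
  · simp [eval_BsPoly_zero hs hη]

end Stability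

/-- **Lemma.** For integer `s ≥ 1` and `η > 0` with `L_{s,η} = (1+ω₀)/ω₁`, the maximum of
`|B_s(ξ)|` over `ξ ∈ [−L_{s,η}, 0]` equals `1`; in particular `|B_s(ξ)| ≤ 1` there. -/
theorem bs_abs_max_eq_one (s : ℕ) (hs : 1 ≤ s) (η : ℝ) (hη : 0 < η) :
    IsGreatest ((fun ξ => |(BsPoly s η).eval ξ|) ''
        Set.Icc (-((1 + omega0 s η) / omega1 s η)) 0) 1 ∧
      ∀ ξ ∈ Set.Icc (-((1 + omega0 s η) / omega1 s η)) (0 : ℝ),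
        |(BsPoly s η).eval ξ| ≤ 1 := by
  have hs₀ : s ≠ 0 := Nat.one_le_iff_ne_zero.1 hs
  have hbound : ∀ ξ ∈ Icc (-((1 + omega0 s η) / omega1 s η)) (0 : ℝ),
      |(BsPoly s η).eval ξ| ≤ 1 := fun ξ hξ => by
    obtain ⟨hB₀, hB₁⟩ := eval_BsPoly_mem_Icc hs₀ hη.le hξ
    rwa [abs_of_nonneg hB₀]
  have hL : 0 ≤ (1 + omega0 s η) / omega1 s η :=
    div_nonneg (by linarith [one_le_omega0 (s := s) hη.le]) (omega1_pos hs₀ hη.le).le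
  refine ⟨⟨⟨0, ⟨neg_nonpos.2 hL, le_rfl⟩, by simp [eval_BsPoly_zero hs₀ hη.le]⟩, ?_⟩, hbound⟩
  exact forall_mem_image.2 fun ξ hξ => hbound ξ hξ
end

section
/- Fix an integer s ≥ 1 and η > 0, and set μ₁ = ω₁/ω₀ and, for 2 ≤ j ≤ s, μ_j = 2ω₁T_{j−1}(ω₀)/T_j(ω₀) and ν_j = 2ω₀T_{j−1}(ω₀)/T_j(ω₀). Let A ∈ ℝ^{d×d} be invertible, b ∈ ℝ^d, ∇f(x) = Ax − b, x* = A⁻¹b, and h > 0. Define the ESGD internal stages x⁰ = x, x¹ = x⁰ − hμ₁∇f(x⁰), and x^j = −μ_j h ∇f(x^{j−1}) + ν_j x^{j−1} − (ν_j − 1)x^{j−2} for 2 ≤ j ≤ s. Then for every 1 ≤ j ≤ s, x^j − x* = (T_j(ω₀·I − ω₁hA)/T_j(ω₀))(x − x*); in particular the ESGD update satisfies x^s − x* = R_s(−hA)(x − x*). -/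
open Polynomial Matrix

lemma chebT_zero : chebT 0 = 1 := Polynomial.Chebyshev.T_zero ℝ
lemma chebT_one : chebT 1 = Polynomial.X := Polynomial.Chebyshev.T_one ℝ
lemma chebT_add_two (n : ℕ) : chebT (n+2) = 2 * Polynomial.X * chebT (n+1) - chebT n := by
  unfold chebT
  push_cast
  exact Polynomial.Chebyshev.T_add_two ℝ n

lemma chebT_eval_ge (x : ℝ) (hx : 1 ≤ x) :
    ∀ n, 1 ≤ (chebT n).eval x ∧ (chebT n).eval x ≤ (chebT (n+1)).eval x := by
  intro n
  induction n with
  | zero => simp [chebT_zero, chebT_one, hx]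
  | succ k ih =>
    obtain ⟨h1, h2⟩ := ih
    refine ⟨le_trans h1 h2, ?_⟩
    rw [chebT_add_two]
    simp only [Polynomial.eval_sub, Polynomial.eval_mul, Polynomial.eval_ofNat, Polynomial.eval_X]
    nlinarith

lemma chebT_eval_ne (x : ℝ) (hx : 1 ≤ x) (n : ℕ) : (chebT n).eval x ≠ 0 := by
  have := (chebT_eval_ge x hx n).1; linarith

/-- The ESGD internal stages `x⁰ = x`, `x¹ = x⁰ − hμ₁∇f(x⁰)`,
`x^j = −μ_j h ∇f(x^{j−1}) + ν_j x^{j−1} − (ν_j − 1)x^{j−2}` applied to the quadratic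
gradient `∇f(x) = Ax − b` with `x* = A⁻¹b` satisfy
`x^j − x* = (T_j(ω₀ I − ω₁hA)/T_j(ω₀))(x − x*)` for `1 ≤ j ≤ s`; in particular
`x^s − x* = R_s(−hA)(x − x*)`. -/
theorem esgd_stage_identity {d : ℕ} (s : ℕ) (hs : 1 ≤ s) (η : ℝ) (hη : 0 < η)
    (A : Matrix (Fin d) (Fin d) ℝ) (hAinv : IsUnit A.det)
    (b : Fin d → ℝ) (h : ℝ) (hh : 0 < h)
    (xstar : Fin d → ℝ) (hxstar : xstar = A⁻¹.mulVec b)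
    (x : ℕ → Fin d → ℝ)
    (hx1 : x 1 = x 0 - (h * (omega1 s η / omega0 s η)) • (A.mulVec (x 0) - b))
    (hxj : ∀ j, 2 ≤ j → j ≤ s → x j =
      -((2 * omega1 s η * (chebT (j - 1)).eval (omega0 s η) /
            (chebT j).eval (omega0 s η)) * h) • (A.mulVec (x (j - 1)) - b)
        + (2 * omega0 s η * (chebT (j - 1)).eval (omega0 s η) /
            (chebT j).eval (omega0 s η)) • x (j - 1)
        - ((2 * omega0 s η * (chebT (j - 1)).eval (omega0 s η) /
            (chebT j).eval (omega0 s η)) - 1) • x (j - 2)) :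
    (∀ j, 1 ≤ j → j ≤ s →
      x j - xstar = ((chebT j).eval (omega0 s η))⁻¹ •
        (Polynomial.aeval
            (omega0 s η • (1 : Matrix (Fin d) (Fin d) ℝ) - (omega1 s η * h) • A)
            (chebT j)).mulVec (x 0 - xstar)) ∧
    x s - xstar =
      (Polynomial.aeval ((-h) • A) (RsPoly s η)).mulVec (x 0 - xstar) := by
  set c0 := omega0 s η with hc0def
  set c1 := omega1 s η with hc1def
  have hc0 : 1 ≤ c0 := by
    have hs2 : (0:ℝ) < (s : ℝ) ^ 2 := by
      have : (0:ℝ) < (s:ℝ) := by exact_mod_cast hs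
      positivity
    have := div_pos hη hs2
    rw [hc0def]; unfold omega0; linarith
  have htne : ∀ n, (chebT n).eval c0 ≠ 0 := chebT_eval_ne c0 hc0
  set M : Matrix (Fin d) (Fin d) ℝ := c0 • (1 : Matrix (Fin d) (Fin d) ℝ) - (c1 * h) • A
    with hM
  have hAb : A.mulVec xstar = b := by
    rw [hxstar, Matrix.mulVec_mulVec, Matrix.mul_nonsing_inv A hAinv, Matrix.one_mulVec]
  have hgrad : ∀ y, A *ᵥ y - b = A *ᵥ (y - xstar) := by
    intro y; rw [Matrix.mulVec_sub, hAb]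
  have key : ∀ j, j ≤ s → x j - xstar =
      ((chebT j).eval c0)⁻¹ • (Polynomial.aeval M (chebT j)) *ᵥ (x 0 - xstar) := by
    intro j
    induction j using Nat.strong_induction_on with
    | _ j ih =>
      match j, ih with
      | 0, ih => intro _; simp [chebT_zero, Matrix.one_mulVec]
      | 1, ih =>
        intro _
        rw [hx1, hgrad, chebT_one]
        simp only [Polynomial.aeval_X, Polynomial.eval_X]
        rw [hM, Matrix.sub_mulVec, Matrix.smul_mulVec, Matrix.smul_mulVec,
          Matrix.one_mulVec]
        have hc0ne : c0 ≠ 0 := by linarith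
        match_scalars <;> (field_simp; try exact Or.inl (by ring); try ring)
      | (k+2), ih =>
        intro hle
        have ih1 := ih (k+1) (by omega) (by omega)
        have ih0 := ih k (by omega) (by omega)
        have hrec := hxj (k+2) (by omega) hle
        simp only [show k+2-1 = k+1 from rfl, show k+2-2 = k from rfl] at hrec
        have step : x (k+2) - xstar =
            (-((2 * c1 * (chebT (k+1)).eval c0 / (chebT (k+2)).eval c0) * h)) •
              (A *ᵥ (x (k+1) - xstar))
            + (2 * c0 * (chebT (k+1)).eval c0 / (chebT (k+2)).eval c0) • (x (k+1) - xstar)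
            - ((2 * c0 * (chebT (k+1)).eval c0 / (chebT (k+2)).eval c0) - 1) •
              (x k - xstar) := by
          rw [hrec, hgrad]; module
        have hA2 : (Polynomial.aeval M (chebT (k+2))) *ᵥ (x 0 - xstar)
            = (2:ℝ) • (M *ᵥ ((Polynomial.aeval M (chebT (k+1))) *ᵥ (x 0 - xstar)))
              - (Polynomial.aeval M (chebT k)) *ᵥ (x 0 - xstar) := by
          rw [chebT_add_two, map_sub, _root_.map_mul, _root_.map_mul, Polynomial.aeval_X,
            map_ofNat, Matrix.sub_mulVec]
          congr 1
          rw [show ((2 : Matrix (Fin d) (Fin d) ℝ)) * M * (Polynomial.aeval M (chebT (k+1)))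
              = (2:ℝ) • (M * Polynomial.aeval M (chebT (k+1))) from by
            rw [mul_assoc, Algebra.smul_def, map_ofNat],
            Matrix.smul_mulVec, ← Matrix.mulVec_mulVec]
        have e2 : (chebT (k+2)).eval c0 =
            2 * c0 * ((chebT (k+1)).eval c0) - (chebT k).eval c0 := by
          rw [chebT_add_two]; simp
        have h2ne : 2 * c0 * ((chebT (k+1)).eval c0) - (chebT k).eval c0 ≠ 0 :=
          e2 ▸ htne (k+2)
        rw [step, ih1, ih0, hA2, e2, Matrix.mulVec_smul]
        rw [hM, Matrix.sub_mulVec, Matrix.smul_mulVec, Matrix.smul_mulVec,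
          Matrix.one_mulVec]
        have h1ne := htne (k+1)
        have h0ne := htne k
        match_scalars
        all_goals field_simp
        all_goals try exact Or.inl (by ring)
        all_goals ring
  constructor
  · exact fun j _ h2 => key j h2
  · have hfin := key s le_rfl
    have haev : Polynomial.aeval ((-h) • A) (RsPoly s η) =
        alphaS s η • Polynomial.aeval M (chebT s) := by
      have hinner : (algebraMap ℝ (Matrix (Fin d) (Fin d) ℝ)) c0
          + (algebraMap ℝ (Matrix (Fin d) (Fin d) ℝ)) c1 * ((-h) • A) = M := by
        rw [Algebra.algebraMap_eq_smul_one, ← Algebra.smul_def, smul_smul, hM,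
          mul_neg, neg_smul, sub_eq_add_neg]
      rw [RsPoly, _root_.map_mul, Polynomial.aeval_C, Polynomial.aeval_comp,
        _root_.map_add, _root_.map_mul, Polynomial.aeval_C, Polynomial.aeval_C,
        Polynomial.aeval_X, hinner, ← Algebra.smul_def]
    rw [hfin, haev, Matrix.smul_mulVec]
    rfl
end
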